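/- arXiv:1011.2000 — 2 statements merged into one kernel-verified Lean document; each statement's English description precedes it below -/
import Mathlib

section
/- For integers d ≥ 2, 1 ≤ w ≤ d-1, and any real number q ≥ 2, the strict inequality q^(d+1)·[d+w, w-1]_q > [d+w-1, w]_q holds, where [n,k]_q is the Gaussian binomial coefficient. -/
/-!
The ratio bound `[n, k+1]_q < q^(n-k) [n, k]_q` for `k ≤ n` and `q ≥ 2` follows by induction on `n`
from the Pascal recursion: the base column uses `[n, 1]_q = 1 + q + ⋯ + q^(n-1) ≤ q^n - 1`, and in
the inductive step both summands of the recursion are compared term by term via the induction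
hypothesis. Applied with `n = d + w - 1`, `k = w - 1`, and combined with the monotonicity of
`[n, k]_q` in `n`, this gives the theorem.
-/

/-- The Gaussian (q-)binomial coefficient, defined via the standard Pascal-type
recursion `[n+1, k+1] = [n, k] + q^(k+1) [n, k+1]`. -/
noncomputable def gbinom (q : ℝ) : ℕ → ℕ → ℝ
  | _, 0 => 1
  | 0, _ + 1 => 0
  | n + 1, k + 1 => gbinom q n k + q ^ (k + 1) * gbinom q n (k + 1)

@[simp]
lemma gbinom_zero_right (q : ℝ) (n : ℕ) : gbinom q n 0 = 1 := by
  cases n <;> rfl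

@[simp]
lemma gbinom_zero_succ (q : ℝ) (k : ℕ) : gbinom q 0 (k + 1) = 0 := rfl

lemma gbinom_succ_succ (q : ℝ) (n k : ℕ) :
    gbinom q (n + 1) (k + 1) = gbinom q n k + q ^ (k + 1) * gbinom q n (k + 1) := rfl

lemma gbinom_nonneg {q : ℝ} (hq : 0 ≤ q) : ∀ n k, 0 ≤ gbinom q n k
  | _, 0 => by simp
  | 0, k + 1 => by simp
  | n + 1, k + 1 => by
    rw [gbinom_succ_succ]
    have := gbinom_nonneg hq n k
    have := gbinom_nonneg hq n (k + 1)
    positivity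

lemma gbinom_eq_zero_of_lt (q : ℝ) : ∀ {n k : ℕ}, n < k → gbinom q n k = 0
  | _, 0, h => absurd h (Nat.not_lt_zero _)
  | 0, k + 1, _ => rfl
  | n + 1, k + 1, h => by
    rw [gbinom_succ_succ, gbinom_eq_zero_of_lt q (by omega : n < k),
      gbinom_eq_zero_of_lt q (by omega : n < k + 1)]
    ring

lemma gbinom_le_succ {q : ℝ} (hq : 1 ≤ q) (n k : ℕ) : gbinom q n k ≤ gbinom q (n + 1) k := by
  cases k with
  | zero => simp
  | succ k =>
    have hq0 : 0 ≤ q := zero_le_one.trans hq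
    calc gbinom q n (k + 1) ≤ q ^ (k + 1) * gbinom q n (k + 1) :=
          le_mul_of_one_le_left (gbinom_nonneg hq0 n (k + 1)) (one_le_pow₀ hq)
      _ ≤ gbinom q (n + 1) (k + 1) :=
          le_add_of_nonneg_left (gbinom_nonneg hq0 n k)

lemma gbinom_one_le {q : ℝ} (hq : 2 ≤ q) : ∀ n, gbinom q n 1 ≤ q ^ n - 1
  | 0 => by simp
  | n + 1 => by
    have ih := gbinom_one_le hq n
    rw [gbinom_succ_succ, gbinom_zero_right, zero_add, pow_one, pow_succ]
    nlinarith

lemma gbinom_succ_right_lt {q : ℝ} (hq : 2 ≤ q) :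
    ∀ {n k : ℕ}, k ≤ n → gbinom q n (k + 1) < q ^ (n - k) * gbinom q n k
  | n, 0, _ => by
    have := gbinom_one_le hq n
    simp only [gbinom_zero_right, Nat.sub_zero, mul_one]
    linarith
  | 0, _ + 1, h => absurd h (Nat.not_succ_le_zero _)
  | m + 1, j + 1, h => by
    have hq0 : 0 ≤ q := by linarith
    have hfirst : gbinom q m (j + 1) < q ^ (m - j) * gbinom q m j :=
      gbinom_succ_right_lt hq (by omega)
    have hsecond : q ^ (j + 2) * gbinom q m (j + 2) ≤ q ^ (m + 1) * gbinom q m (j + 1) := by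
      rcases Nat.lt_or_ge m (j + 1) with hmj | hjm
      · rw [gbinom_eq_zero_of_lt q (by omega : m < j + 2), mul_zero]
        exact mul_nonneg (pow_nonneg hq0 _) (gbinom_nonneg hq0 _ _)
      · have hnext : gbinom q m (j + 2) < q ^ (m - (j + 1)) * gbinom q m (j + 1) :=
          gbinom_succ_right_lt hq hjm
        calc q ^ (j + 2) * gbinom q m (j + 2)
            ≤ q ^ (j + 2) * (q ^ (m - (j + 1)) * gbinom q m (j + 1)) := by gcongr
          _ = q ^ (m + 1) * gbinom q m (j + 1) := by
            rw [← mul_assoc, ← pow_add]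
            congr 2
            omega
    have hexp : q ^ (m - j) * q ^ (j + 1) = q ^ (m + 1) := by
      rw [← pow_add]
      congr 1
      omega
    rw [gbinom_succ_succ, gbinom_succ_succ, Nat.add_sub_add_right, mul_add, ← mul_assoc, hexp]
    linarith

theorem strict_gaussian_inequality_general (d w : ℕ) (hw1 : 1 ≤ w)
    (q : ℝ) (hq : 2 ≤ q) :
    gbinom q (d + w - 1) w < q ^ (d + 1) * gbinom q (d + w) (w - 1) := by
  obtain ⟨v, rfl⟩ : ∃ v, w = v + 1 := ⟨w - 1, by omega⟩
  have hq1 : 1 ≤ q := by linarith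
  have hq0 : 0 ≤ q := by linarith
  have hratio : gbinom q (d + v) (v + 1) < q ^ d * gbinom q (d + v) v := by
    simpa using gbinom_succ_right_lt hq (Nat.le_add_left v d)
  calc gbinom q (d + (v + 1) - 1) (v + 1)
      = gbinom q (d + v) (v + 1) := by rw [← add_assoc, Nat.add_sub_cancel]
    _ < q ^ d * gbinom q (d + v) v := hratio
    _ ≤ q ^ (d + 1) * gbinom q (d + v + 1) v :=
      mul_le_mul (pow_le_pow_right₀ hq1 d.le_succ) (gbinom_le_succ hq1 _ _)
        (gbinom_nonneg hq0 _ _) (pow_nonneg hq0 _)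
    _ = q ^ (d + 1) * gbinom q (d + (v + 1)) (v + 1 - 1) := by rw [add_assoc, Nat.add_sub_cancel]

/-- For integers `d ≥ 2`, `1 ≤ w ≤ d-1`, and any real `q ≥ 2`,
the strict inequality `q^(d+1)·[d+w, w-1]_q > [d+w-1, w]_q` holds. -/
theorem strict_gaussian_inequality (d w : ℕ) (hd : 2 ≤ d) (hw1 : 1 ≤ w) (hw2 : w ≤ d - 1)
    (q : ℝ) (hq : 2 ≤ q) :
    gbinom q (d + w - 1) w < q ^ (d + 1) * gbinom q (d + w) (w - 1) :=
  strict_gaussian_inequality_general d w hw1 q hq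
end

section
/- Let Φ = (a; a*; {e_i}; {e_i*}) be a Leonard system on the irreducible module W, of diameter d. Then for every 0 ≤ i ≤ d, the sum of eigenspaces e_0*W + e_1*W + ⋯ + e_i*W equals e_0*W + a(e_0*W) + a²(e_0*W) + ⋯ + a^i(e_0*W). -/
/-- `e` is an ordering of the primitive idempotents of a multiplicity-free
operator `a`: pairwise orthogonal nonzero idempotents summing to the identity, with
`a e_i = θ_i e_i` for distinct scalars `θ_i`. -/
def IsPrimIdemSeq {V : Type*} [AddCommGroup V] [Module ℂ V] (d : ℕ)
    (a : Module.End ℂ V) (e : Fin (d + 1) → Module.End ℂ V) : Prop :=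
  (∃ θ : Fin (d + 1) → ℂ, Function.Injective θ ∧ ∀ i, a * e i = θ i • e i) ∧
    (∀ i j, e i * e j = if i = j then e i else 0) ∧
    (∑ i, e i = 1) ∧ (∀ i, e i ≠ 0)

/-- A Leonard system `(a; a*; {e_i}; {e_i*})` on a `(d+1)`-dimensional space:
(LS1)–(LS3) `a, a*` multiplicity-free with primitive idempotent orderings `e, e*`;
(LS4) `e_i* a e_j* = 0` if `|i−j| > 1` and `≠ 0` if `|i−j| = 1`;
(LS5) `e_i a* e_j = 0` if `|i−j| > 1` and `≠ 0` if `|i−j| = 1`. -/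
def IsLeonardSystem {V : Type*} [AddCommGroup V] [Module ℂ V] (d : ℕ)
    (a astar : Module.End ℂ V) (e estar : Fin (d + 1) → Module.End ℂ V) : Prop :=
  IsPrimIdemSeq d a e ∧ IsPrimIdemSeq d astar estar ∧
    (∀ i j : Fin (d + 1), ((i : ℕ) + 1 < (j : ℕ) ∨ (j : ℕ) + 1 < (i : ℕ)) →
      estar i * a * estar j = 0) ∧
    (∀ i j : Fin (d + 1), ((i : ℕ) + 1 = (j : ℕ) ∨ (j : ℕ) + 1 = (i : ℕ)) →
      estar i * a * estar j ≠ 0) ∧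
    (∀ i j : Fin (d + 1), ((i : ℕ) + 1 < (j : ℕ) ∨ (j : ℕ) + 1 < (i : ℕ)) →
      e i * astar * e j = 0) ∧
    (∀ i j : Fin (d + 1), ((i : ℕ) + 1 = (j : ℕ) ∨ (j : ℕ) + 1 = (i : ℕ)) →
      e i * astar * e j ≠ 0)

section Aux
variable {V : Type*} [AddCommGroup V] [Module ℂ V] [FiniteDimensional ℂ V]

lemma primIdem_fix {d : ℕ} {a : Module.End ℂ V} {e : Fin (d + 1) → Module.End ℂ V}
    (h : IsPrimIdemSeq d a e) (l : Fin (d + 1)) (v : V)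
    (hv : v ∈ LinearMap.range (e l)) : e l v = v := by
  obtain ⟨w, rfl⟩ := hv
  have := congrArg (fun f : Module.End ℂ V => f w) (h.2.1 l l)
  simpa using this

lemma primIdem_zero {d : ℕ} {a : Module.End ℂ V} {e : Fin (d + 1) → Module.End ℂ V}
    (h : IsPrimIdemSeq d a e) {l m : Fin (d + 1)} (hlm : l ≠ m) (v : V)
    (hv : v ∈ LinearMap.range (e m)) : e l v = 0 := by
  obtain ⟨w, rfl⟩ := hv
  have := congrArg (fun f : Module.End ℂ V => f w) (h.2.1 l m)
  simpa [hlm] using this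

lemma primIdem_sum_apply {d : ℕ} {a : Module.End ℂ V} {e : Fin (d + 1) → Module.End ℂ V}
    (h : IsPrimIdemSeq d a e) (v : V) : ∑ l, e l v = v := by
  have := congrArg (fun f : Module.End ℂ V => f v) h.2.2.1
  simpa using this

lemma primIdem_finrank_range {d : ℕ} (hdim : Module.finrank ℂ V = d + 1)
    {a : Module.End ℂ V} {e : Fin (d + 1) → Module.End ℂ V}
    (h : IsPrimIdemSeq d a e) (j : Fin (d + 1)) :
    Module.finrank ℂ (LinearMap.range (e j)) = 1 := by
  classical
  let φ : V →ₗ[ℂ] ((l : Fin (d + 1)) → LinearMap.range (e l)) :=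
    LinearMap.pi fun l => (e l).codRestrict (LinearMap.range (e l))
      (fun x => LinearMap.mem_range_self _ x)
  have hinj : Function.Injective φ := by
    intro x y hxy
    have hz : ∀ l, e l x = e l y := fun l => congrArg Subtype.val (congrFun hxy l)
    calc x = ∑ l, e l x := (primIdem_sum_apply h x).symm
    _ = ∑ l, e l y := by simp [hz]
    _ = y := primIdem_sum_apply h y
  have hsurj : Function.Surjective φ := by
    intro v
    refine ⟨∑ l, (v l : V), ?_⟩
    funext l
    apply Subtype.ext
    show e l (∑ m, (v m : V)) = (v l : V)
    rw [map_sum]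
    rw [Finset.sum_eq_single l]
    · exact primIdem_fix h l _ (v l).2
    · intro m _ hml
      exact primIdem_zero h (Ne.symm hml) _ (v m).2
    · simp
  have hdim2 : Module.finrank ℂ ((l : Fin (d + 1)) → LinearMap.range (e l)) = d + 1 := by
    rw [← (LinearEquiv.ofBijective φ ⟨hinj, hsurj⟩).finrank_eq, hdim]
  rw [Module.finrank_pi_fintype] at hdim2
  have hpos : ∀ l, 1 ≤ Module.finrank ℂ (LinearMap.range (e l)) := by
    intro l
    rw [Nat.one_le_iff_ne_zero]
    intro h0
    exact h.2.2.2 l (LinearMap.range_eq_bot.mp (Submodule.finrank_eq_zero.mp h0))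
  by_contra hne
  have h2 : 2 ≤ Module.finrank ℂ (LinearMap.range (e j)) := by
    have := hpos j
    omega
  have : (d + 1 : ℕ) < d + 1 := by
    calc (d + 1 : ℕ) = ∑ _l : Fin (d + 1), 1 := by simp
    _ < ∑ l, Module.finrank ℂ (LinearMap.range (e l)) :=
        Finset.sum_lt_sum (fun l _ => hpos l) ⟨j, Finset.mem_univ j, h2⟩
    _ = d + 1 := hdim2
  exact absurd this (lt_irrefl _)

end Aux

/-- For a Leonard system on its irreducible module `W = V`, for every `0 ≤ i ≤ d`:
`e_0*W + e_1*W + ⋯ + e_i*W = e_0*W + a(e_0*W) + ⋯ + a^i(e_0*W)`. -/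
theorem sum_eigenspaces_eq_krylov {V : Type*} [AddCommGroup V] [Module ℂ V]
    [FiniteDimensional ℂ V] (d : ℕ) (hdim : Module.finrank ℂ V = d + 1)
    (a astar : Module.End ℂ V) (e estar : Fin (d + 1) → Module.End ℂ V)
    (h : IsLeonardSystem d a astar e estar) :
    ∀ i : Fin (d + 1),
      (⨆ j : Fin (d + 1), ⨆ _ : j ≤ i, LinearMap.range (estar j)) =
        ⨆ k : Fin (d + 1), ⨆ _ : k ≤ i,
          Submodule.map ((a ^ (k : ℕ) : Module.End ℂ V) : V →ₗ[ℂ] V)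
            (LinearMap.range (estar 0)) := by
  classical
  obtain ⟨-, hps, hls0, hlsne, -, -⟩ := h
  set S : ℕ → Submodule ℂ V := fun n =>
    ⨆ j : Fin (d + 1), ⨆ _ : (j : ℕ) ≤ n, LinearMap.range (estar j) with hS
  set K : ℕ → Submodule ℂ V := fun n =>
    ⨆ k : Fin (d + 1), ⨆ _ : (k : ℕ) ≤ n,
      Submodule.map ((a ^ (k : ℕ) : Module.End ℂ V) : V →ₗ[ℂ] V)
        (LinearMap.range (estar 0)) with hK
  have hleS : ∀ (n : ℕ) (j : Fin (d + 1)), (j : ℕ) ≤ n →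
      LinearMap.range (estar j) ≤ S n := fun n j hj => le_iSup₂_of_le j hj le_rfl
  have hleK : ∀ (n : ℕ) (k : Fin (d + 1)), (k : ℕ) ≤ n →
      Submodule.map ((a ^ (k : ℕ) : Module.End ℂ V) : V →ₗ[ℂ] V)
        (LinearMap.range (estar 0)) ≤ K n := fun n k hk => le_iSup₂_of_le k hk le_rfl
  have Smono : ∀ {m n : ℕ}, m ≤ n → S m ≤ S n := fun {m n} hmn =>
    iSup_le fun j => iSup_le fun hj => hleS n j (hj.trans hmn)
  have Kmono : ∀ {m n : ℕ}, m ≤ n → K m ≤ K n := fun {m n} hmn =>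
    iSup_le fun k => iSup_le fun hk => hleK n k (hk.trans hmn)
  -- a maps range (estar j) into S (j+1)
  have hstep : ∀ j : Fin (d + 1),
      Submodule.map (a : V →ₗ[ℂ] V) (LinearMap.range (estar j)) ≤ S ((j : ℕ) + 1) := by
    rintro j v ⟨u, hu, rfl⟩
    have hdec : a u = ∑ l, estar l (a u) := (primIdem_sum_apply hps (a u)).symm
    rw [hdec]
    apply Submodule.sum_mem
    intro l _
    by_cases hl : (l : ℕ) ≤ (j : ℕ) + 1
    · exact hleS ((j : ℕ) + 1) l hl (LinearMap.mem_range_self _ _)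
    · have hz : estar l * a * estar j = 0 := hls0 l j (Or.inr (by omega))
      have hu' : estar j u = u := primIdem_fix hps j u hu
      have hco : estar l (a u) = (estar l * a * estar j) u := by
        simp [Module.End.mul_apply, hu']
      rw [hco, hz]
      simp
  -- a maps S n into S (n+1)
  have haS : ∀ n : ℕ, Submodule.map (a : V →ₗ[ℂ] V) (S n) ≤ S (n + 1) := by
    intro n
    rw [hS]
    simp only [Submodule.map_iSup]
    refine iSup_le fun j => iSup_le fun hj => ?_
    exact (hstep j).trans (Smono (by omega))
  -- Krylov inclusion: a^m e_0* V ≤ S m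
  have hKry : ∀ m : ℕ,
      Submodule.map ((a ^ m : Module.End ℂ V) : V →ₗ[ℂ] V) (LinearMap.range (estar 0)) ≤ S m := by
    intro m
    induction m with
    | zero =>
      simp only [pow_zero, Module.End.one_eq_id, Submodule.map_id]
      exact hleS 0 0 (by simp)
    | succ m ih =>
      have hco : ((a ^ (m + 1) : Module.End ℂ V) : V →ₗ[ℂ] V) =
          (a : V →ₗ[ℂ] V).comp ((a ^ m : Module.End ℂ V) : V →ₗ[ℂ] V) := by
        rw [pow_succ']; rfl
      rw [hco, Submodule.map_comp]
      exact le_trans (Submodule.map_mono ih) (haS m)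
  -- main induction
  have main : ∀ n : ℕ, S n = K n := by
    intro n
    induction n with
    | zero =>
      apply le_antisymm
      · refine iSup_le fun j => iSup_le fun hj => ?_
        have hj0 : j = 0 := Fin.ext (by simpa using hj)
        subst hj0
        have hone : LinearMap.range (estar 0) =
            Submodule.map ((a ^ ((0 : Fin (d + 1)) : ℕ) : Module.End ℂ V) : V →ₗ[ℂ] V)
              (LinearMap.range (estar 0)) := by
          simp [pow_zero, Module.End.one_eq_id, Submodule.map_id]
        rw [hone]
        exact hleK 0 0 (by simp)
      · refine iSup_le fun k => iSup_le fun hk => ?_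
        have hk0 : k = 0 := Fin.ext (by simpa using hk)
        subst hk0
        simpa using (hKry 0).trans (Smono (le_refl 0))
    | succ n ih =>
      apply le_antisymm
      · refine iSup_le fun j => iSup_le fun hj => ?_
        rcases Nat.lt_or_ge (j : ℕ) (n + 1) with hjn | hjn
        · exact (hleS n j (by omega)).trans (ih.le.trans (Kmono (Nat.le_succ n)))
        · -- j.val = n + 1
          have hjv : (j : ℕ) = n + 1 := by omega
          have hnd : n + 1 ≤ d := by have := j.isLt; omega
          set jp : Fin (d + 1) := ⟨n, by omega⟩ with hjp
          have hjpv : (jp : ℕ) = n := rfl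
          have hT : estar j * a * estar jp ≠ 0 := hlsne j jp (Or.inr (by omega))
          have hTle : LinearMap.range (estar j * a * estar jp) ≤
              LinearMap.range (estar j) := by
            rintro v ⟨w, rfl⟩
            exact ⟨a (estar jp w), rfl⟩
          have hTr : LinearMap.range (estar j * a * estar jp) =
              LinearMap.range (estar j) := by
            apply Submodule.eq_of_le_of_finrank_le hTle
            rw [primIdem_finrank_range hdim hps j, Nat.one_le_iff_ne_zero]
            intro h0
            exact hT (LinearMap.range_eq_bot.mp (Submodule.finrank_eq_zero.mp h0))
          have haK : Submodule.map (a : V →ₗ[ℂ] V) (K n) ≤ K (n + 1) := by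
            rw [hK]
            simp only [Submodule.map_iSup]
            refine iSup_le fun k => iSup_le fun hk => ?_
            have hk1 : (k : ℕ) + 1 < d + 1 := by omega
            have hco : Submodule.map (a : V →ₗ[ℂ] V)
                (Submodule.map ((a ^ (k : ℕ) : Module.End ℂ V) : V →ₗ[ℂ] V)
                  (LinearMap.range (estar 0))) =
                Submodule.map
                  ((a ^ ((⟨(k : ℕ) + 1, hk1⟩ : Fin (d + 1)) : ℕ) : Module.End ℂ V) : V →ₗ[ℂ] V)
                  (LinearMap.range (estar 0)) := by
              rw [← Submodule.map_comp]
              congr 1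
              show a ∘ₗ a ^ (k : ℕ) = a ^ ((k : ℕ) + 1)
              rw [pow_succ']; rfl
            rw [hco]
            exact hleK (n + 1) _ (by show (k : ℕ) + 1 ≤ n + 1; omega)
          rw [← hTr]
          rintro v ⟨w, rfl⟩
          set u : V := estar jp w with hud
          have huK : u ∈ K n := by
            rw [← ih]
            exact hleS n jp (by omega) (LinearMap.mem_range_self _ _)
          have hval : (estar j * a * estar jp) w = estar j (a u) := rfl
          rw [hval]
          have hdecomp : estar j (a u) = a u - ∑ l ∈ Finset.univ.erase j, estar l (a u) := by
            have hsum := primIdem_sum_apply hps (a u)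
            rw [← Finset.add_sum_erase _ _ (Finset.mem_univ j)] at hsum
            linear_combination (norm := module) hsum
          rw [hdecomp]
          apply Submodule.sub_mem
          · exact haK ⟨u, huK, rfl⟩
          · apply Submodule.sum_mem
            intro l hl
            have hlj : l ≠ j := (Finset.mem_erase.mp hl).1
            by_cases hln : (l : ℕ) ≤ n
            · have hmem : estar l (a u) ∈ S n :=
                hleS n l hln (LinearMap.mem_range_self _ _)
              rw [ih] at hmem
              exact Kmono (Nat.le_succ n) hmem
            · have hlgt : (jp : ℕ) + 1 < (l : ℕ) := by
                have hne : (l : ℕ) ≠ n + 1 := fun hc => hlj (Fin.ext (by omega))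
                omega
              have hz : estar l * a * estar jp = 0 := hls0 l jp (Or.inr hlgt)
              have hu' : estar jp u = u := primIdem_fix hps jp u ⟨w, rfl⟩
              have hco : estar l (a u) = (estar l * a * estar jp) u := by
                simp [Module.End.mul_apply, hu']
              rw [hco, hz]
              simp
      · refine iSup_le fun k => iSup_le fun hk => ?_
        exact le_trans (hKry (k : ℕ)) (Smono hk)
  -- conclude
  intro i
  have hL : (⨆ j : Fin (d + 1), ⨆ _ : j ≤ i, LinearMap.range (estar j)) = S (i : ℕ) :=
    le_antisymm (iSup_le fun j => iSup_le fun hj => hleS (i : ℕ) j hj)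
      (iSup_le fun j => iSup_le fun hj => le_iSup₂_of_le j hj le_rfl)
  have hR : (⨆ k : Fin (d + 1), ⨆ _ : k ≤ i,
      Submodule.map ((a ^ (k : ℕ) : Module.End ℂ V) : V →ₗ[ℂ] V)
        (LinearMap.range (estar 0))) = K (i : ℕ) :=
    le_antisymm (iSup_le fun k => iSup_le fun hk => hleK (i : ℕ) k hk)
      (iSup_le fun k => iSup_le fun hk => le_iSup₂_of_le k hk le_rfl)
  rw [hL, hR, main]
end
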